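/- Let Γ = ℤ/sℤ with s ≥ 2 and let I = {(i,i) : i ∈ Γ} ∪ {(i,i+1) : i ∈ Γ} ⊆ Γ × Γ. Then the bipartite graph associated to I is a single cycle of length 2s, and it contains no cycle of length 2l for any 2 ≤ l ≤ s - 1. -/

import Mathlib

/-- The bipartite graph on `R ⊕ C` associated to a set of couples `I ⊆ R × C`. -/
def bipartiteGraph {R C : Type*} (I : Set (R × C)) : SimpleGraph (R ⊕ C) where
  Adj x y := ∃ r c, (r, c) ∈ I ∧
    ((x = Sum.inl r ∧ y = Sum.inr c) ∨ (x = Sum.inr c ∧ y = Sum.inl r))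
  symm := by constructor; rintro x y ⟨r, c, h, h'⟩; exact ⟨r, c, h, h'.symm.imp And.symm And.symm⟩
  loopless := by constructor; rintro x ⟨r, c, h, ⟨h1, h2⟩ | ⟨h1, h2⟩⟩ <;> simp_all

/-!
Sending row `i` to `2 i` and column `j` to `2 j - 1` in `ℤ/2sℤ` is an isomorphism onto the cycle
graph on `2 s` vertices. Its standard cycle has length `2 s`, which is also its number of edges,
so as a trail it passes through every edge. Conversely, a cycle in the cycle graph never turns
back, so all of its steps are `+1` or all are `-1`; since it returns to its start, `2 s` divides
its length, and so its length is exactly `2 s`.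
-/

open SimpleGraph Finset Fin.CommRing

section bipartiteGraph

variable {R C : Type*} {I : Set (R × C)}

@[simp]
theorem bipartiteGraph_adj_inl_inr {r : R} {c : C} :
    (bipartiteGraph I).Adj (.inl r) (.inr c) ↔ (r, c) ∈ I := by
  simp [bipartiteGraph]

@[simp]
theorem bipartiteGraph_adj_inr_inl {r : R} {c : C} :
    (bipartiteGraph I).Adj (.inr c) (.inl r) ↔ (r, c) ∈ I := by
  simp [bipartiteGraph]

@[simp]
theorem bipartiteGraph_not_adj_inl_inl {r r' : R} :
    ¬(bipartiteGraph I).Adj (.inl r) (.inl r') := by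
  simp [bipartiteGraph]

@[simp]
theorem bipartiteGraph_not_adj_inr_inr {c c' : C} :
    ¬(bipartiteGraph I).Adj (.inr c) (.inr c') := by
  simp [bipartiteGraph]

end bipartiteGraph

theorem SimpleGraph.Walk.IsTrail.isEulerian_of_card_edgeFinset_le {V : Type*} [DecidableEq V]
    {G : SimpleGraph V} [Fintype G.edgeSet] {u v : V} {p : G.Walk u v} (hp : p.IsTrail)
    (h : #G.edgeFinset ≤ p.length) : p.IsEulerian := by
  have hsub : hp.edgesFinset ⊆ G.edgeFinset := fun e he ↦
    mem_edgeFinset.mpr (p.edges_subset_edgeSet he)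
  have hcard : #hp.edgesFinset = p.length := p.length_edges
  have heq := eq_of_subset_of_card_le hsub (hcard ▸ h)
  refine hp.isEulerian_of_forall_mem fun e he ↦ ?_
  rw [← mem_edgeFinset, ← heq] at he
  exact he

theorem card_edgeFinset_cycleGraph {n : ℕ} (hn : 3 ≤ n) : #(cycleGraph n).edgeFinset = n := by
  obtain ⟨m, rfl⟩ := Nat.exists_eq_add_of_le' hn
  have := sum_degrees_eq_twice_card_edges (cycleGraph (m + 3))
  simp only [cycleGraph_degree_three_le, sum_const, card_univ, Fintype.card_fin,
    smul_eq_mul] at this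
  omega

theorem cycleGraph_adj_iff_sub {n : ℕ} [NeZero n] (hn : n ≠ 1) {u v : Fin n} :
    (cycleGraph n).Adj u v ↔ v - u = 1 ∨ v - u = -1 := by
  obtain ⟨m, rfl⟩ : ∃ m, n = m + 2 := ⟨n - 2, by have := NeZero.ne n; omega⟩
  rw [cycleGraph_adj, ← neg_sub v u, neg_eq_iff_eq_neg, or_comm]

theorem cycleGraph_sub_eq_sub_of_adj_of_adj {n : ℕ} {u v w : Fin (n + 2)}
    (huv : (cycleGraph (n + 2)).Adj u v) (hvw : (cycleGraph (n + 2)).Adj v w) (hwu : w ≠ u) :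
    w - v = v - u := by
  rw [cycleGraph_adj_iff_sub (by omega)] at huv hvw
  have : w - v ≠ -(v - u) := fun h ↦ hwu (by linear_combination h)
  rcases huv with huv | huv <;> rcases hvw with hvw | hvw <;> simp_all

theorem cycleGraph_dvd_length_of_isCycle {n : ℕ} {u : Fin n} {c : (cycleGraph n).Walk u u}
    (hc : c.IsCycle) : n ∣ c.length := by
  rcases n with _ | _ | n
  · exact u.elim0
  · exact absurd (c.adj_snd hc.not_nil) cycleGraph_one_adj
  set d := c.getVert 1 - c.getVert 0
  have hstep : ∀ i < c.length, c.getVert (i + 1) - c.getVert i = d := by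
    intro i hi
    induction i with
    | zero => rfl
    | succ i ih =>
      rw [← ih (by omega)]
      refine cycleGraph_sub_eq_sub_of_adj_of_adj (c.adj_getVert_succ (by omega))
        (c.adj_getVert_succ hi) ?_
      simpa using (hc.getVert_sub_one_ne_getVert_add_one (i := i + 1) (by omega)).symm
  have hwind : c.length • d = 0 := by
    rw [← card_range c.length, ← sum_const, ← sum_congr rfl fun i hi ↦ hstep i (mem_range.mp hi),
      sum_range_sub (c.getVert ·), c.getVert_length, c.getVert_zero, sub_self]
  have hpos : 0 < c.length := by have := hc.three_le_length; omega
  have hd : d = 1 ∨ d = -1 := (cycleGraph_adj_iff_sub (by omega)).mp (c.adj_getVert_succ hpos)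
  rw [← Fin.natCast_eq_zero]
  rcases hd with hd | hd
  · rwa [hd, nsmul_one] at hwind
  · rwa [hd, smul_neg, nsmul_one, neg_eq_zero] at hwind

theorem cycleGraph_length_of_isCycle {n : ℕ} {u : Fin n} {c : (cycleGraph n).Walk u u}
    (hc : c.IsCycle) : c.length = n := by
  have hle : c.length ≤ n := by
    have := hc.isPath_tail.length_lt
    rw [Fintype.card_fin] at this
    rw [← c.length_tail_add_one hc.not_nil]
    omega
  exact Nat.le_antisymm hle (Nat.le_of_dvd (by have := hc.three_le_length; omega)
    (cycleGraph_dvd_length_of_isCycle hc))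

def diagAndShiftedDiag (R : Type*) [Add R] [One R] : Set (R × R) :=
  {p | p.2 = p.1} ∪ {p | p.2 = p.1 + 1}

@[simp]
theorem mem_diagAndShiftedDiag {R : Type*} [Add R] [One R] {p : R × R} :
    p ∈ diagAndShiftedDiag R ↔ p.2 = p.1 ∨ p.2 = p.1 + 1 := Iff.rfl

theorem Fin.two_mul_ne_one {s : ℕ} [NeZero s] (x : Fin (2 * s)) : 2 * x ≠ 1 := by
  intro h
  have hs : (s : Fin (2 * s)) ≠ 0 := by
    rw [Ne, Fin.natCast_eq_zero]
    exact Nat.not_dvd_of_pos_of_lt (Nat.pos_of_neZero s) (by have := NeZero.ne s; omega)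
  apply hs
  calc (s : Fin (2 * s)) = s * (2 * x) := by rw [h, mul_one]
    _ = ((2 * s : ℕ) : Fin (2 * s)) * x := by push_cast; ring
    _ = 0 := by rw [Fin.natCast_self, zero_mul]

namespace ZMod

variable (s : ℕ) [NeZero s]

def doubleHom : ZMod s →+ Fin (2 * s) :=
  ZMod.lift s ⟨(AddMonoidHom.mulLeft 2).comp (Int.castAddHom _), by
    have h := Fin.natCast_self (2 * s)
    push_cast at h
    simpa using h⟩

variable {s}

@[simp]
theorem doubleHom_natCast (n : ℕ) : doubleHom s n = 2 * (n : Fin (2 * s)) := by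
  rw [← Int.cast_natCast n, doubleHom, ZMod.lift_coe]
  simp

theorem doubleHom_one : doubleHom s 1 = 2 := by
  simpa using doubleHom_natCast (s := s) 1

theorem doubleHom_injective : Function.Injective (doubleHom s) := by
  refine (injective_iff_map_eq_zero _).mpr fun a ha ↦ ?_
  obtain ⟨n, rfl⟩ := natCast_zmod_surjective a
  rw [doubleHom_natCast] at ha
  have h2n : ((2 * n : ℕ) : Fin (2 * s)) = 0 := by push_cast; exact ha
  rw [Fin.natCast_eq_zero, Nat.mul_dvd_mul_iff_left two_pos] at h2n
  exact (natCast_eq_zero_iff n s).mpr h2n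

theorem doubleHom_ne_one (a : ZMod s) : doubleHom s a ≠ 1 := by
  obtain ⟨n, rfl⟩ := natCast_zmod_surjective a
  simpa using Fin.two_mul_ne_one (n : Fin (2 * s))

end ZMod

section Iso

open ZMod

variable (s : ℕ) [NeZero s]

/-- Places row `i` between its two neighbours, the columns `i` and `i + 1`. -/
def toCycleGraph : ZMod s ⊕ ZMod s → Fin (2 * s) :=
  Sum.elim (doubleHom s) (doubleHom s · - 1)

variable {s}

theorem toCycleGraph_injective : Function.Injective (toCycleGraph s) := by
  have hne (i j : ZMod s) : doubleHom s i ≠ doubleHom s j - 1 := fun h ↦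
    doubleHom_ne_one (j - i) (by rw [map_sub, h, sub_sub_cancel])
  rintro (i | i) (j | j) h <;> simp only [toCycleGraph, Sum.elim_inl, Sum.elim_inr] at h
  · rw [doubleHom_injective h]
  · exact absurd h (hne i j)
  · exact absurd h.symm (hne j i)
  · rw [doubleHom_injective (sub_left_inj.mp h)]

theorem cycleGraph_adj_toCycleGraph_iff {x y : ZMod s ⊕ ZMod s} :
    (cycleGraph (2 * s)).Adj (toCycleGraph s x) (toCycleGraph s y) ↔
      (bipartiteGraph (diagAndShiftedDiag (ZMod s))).Adj x y := by
  have h2s : 2 * s ≠ 1 := by have := NeZero.ne s; omega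
  have hdiff (i j : ZMod s) : doubleHom s j - doubleHom s i ≠ 1 := by
    rw [← map_sub]; exact doubleHom_ne_one _
  have hdiff' (i j : ZMod s) : doubleHom s j - doubleHom s i ≠ -1 := by
    rw [← neg_sub, Ne, neg_inj]; exact hdiff j i
  have hrow_col (i j : ZMod s) :
      (cycleGraph (2 * s)).Adj (doubleHom s i) (doubleHom s j - 1) ↔ j = i ∨ j = i + 1 := by
    rw [cycleGraph_adj_iff_sub h2s, ← doubleHom_injective.eq_iff, ← doubleHom_injective.eq_iff,
      map_add, doubleHom_one]
    constructor <;> rintro (h | h) <;> [right; left; right; left] <;> linear_combination h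
  rcases x with i | i <;> rcases y with j | j
  · simp only [toCycleGraph, Sum.elim_inl, bipartiteGraph_not_adj_inl_inl, iff_false,
      cycleGraph_adj_iff_sub h2s]
    exact not_or.mpr ⟨hdiff i j, hdiff' i j⟩
  · simpa [toCycleGraph] using hrow_col i j
  · rw [adj_comm, (bipartiteGraph _).adj_comm]
    simpa [toCycleGraph] using hrow_col j i
  · simp only [toCycleGraph, Sum.elim_inr, bipartiteGraph_not_adj_inr_inr, iff_false,
      cycleGraph_adj_iff_sub h2s, sub_sub_sub_cancel_right]
    exact not_or.mpr ⟨hdiff i j, hdiff' i j⟩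

noncomputable def bipartiteGraphIsoCycleGraph :
    bipartiteGraph (diagAndShiftedDiag (ZMod s)) ≃g cycleGraph (2 * s) where
  toEquiv := Equiv.ofBijective (toCycleGraph s) <|
    (Fintype.bijective_iff_injective_and_card _).mpr
      ⟨toCycleGraph_injective, by simp [Fintype.card_sum, ZMod.card, two_mul]⟩
  map_rel_iff' := cycleGraph_adj_toCycleGraph_iff

end Iso

/-- For `Γ = ℤ/sℤ` with `s ≥ 2` and `I = {(i,i)} ∪ {(i,i+1)}`, the associated bipartite
graph is a single cycle of length `2s` (a cycle of length `2s` passing through every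
edge), and it contains no cycle of length `2l` for any `2 ≤ l ≤ s - 1`. -/
theorem zmod_bipartite_cycle (s : ℕ) (hs : 2 ≤ s)
    (I : Set (ZMod s × ZMod s))
    (hI : I = {p : ZMod s × ZMod s | p.2 = p.1} ∪ {p : ZMod s × ZMod s | p.2 = p.1 + 1}) :
    (∃ (v : ZMod s ⊕ ZMod s) (c : (bipartiteGraph I).Walk v v), c.IsCycle ∧
      c.length = 2 * s ∧
      ∀ e, e ∈ (bipartiteGraph I).edgeSet ↔ e ∈ c.edges) ∧
    ∀ l, 2 ≤ l → l ≤ s - 1 →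
      ¬ ∃ (v : ZMod s ⊕ ZMod s) (c : (bipartiteGraph I).Walk v v),
        c.IsCycle ∧ c.length = 2 * l := by
  classical
  obtain rfl : I = diagAndShiftedDiag (ZMod s) := hI
  have : NeZero s := ⟨by omega⟩
  let e := bipartiteGraphIsoCycleGraph (s := s)
  refine ⟨?_, ?_⟩
  · obtain ⟨v, c, hc, hlen⟩ := (cycleGraph_isContained_iff (by omega)).mp e.isContained'
    have hE : c.IsEulerian := hc.isTrail.isEulerian_of_card_edgeFinset_le <| by
      rw [e.card_edgeFinset_eq, card_edgeFinset_cycleGraph (by omega), hlen]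
    exact ⟨v, c, hc, hlen, fun _ ↦ hE.mem_edges_iff.symm⟩
  · rintro l - hls ⟨v, c, hc, hlen⟩
    have := cycleGraph_length_of_isCycle (hc.map (f := e.toHom) e.injective)
    rw [Walk.length_map] at this
    omega
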